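/- For every n ∈ ℤ, the object S_{n,∞} is a noetherian object of the abelian category S: every ascending chain of subobjects of S_{n,∞} is eventually stationary. -/

import Mathlib

open CategoryTheory CategoryTheory.Limits

set_option linter.unusedVariables false

/-- The category `S` of sequences of `k`-vector spaces: functors from `ℤ`
(viewed as a poset category) to `k`-vector spaces. -/
abbrev SeqCat (k : Type) [Field k] := ℤ ⥤ ModuleCat k

variable {k : Type} [Field k]

/-- The transition map `d_V^i : V^i ⟶ V^{i+1}` of a sequence `V`. -/
noncomputable def SeqCat.d (V : SeqCat k) (i : ℤ) : V.obj i ⟶ V.obj (i + 1) :=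
  V.map (homOfLE (by omega))

variable (k)

/-- The component in degree `i` of the sequence `S_{a,b}` (for `a ∈ ℤ ∪ {−∞}`,
`b ∈ ℤ ∪ {∞}`), as a submodule of `k`: it is all of `k` if `a ≤ i ≤ b` and `0`
otherwise. -/
noncomputable def SabObj (a : WithBot ℤ) (b : WithTop ℤ) (i : ℤ) : Submodule k k :=
  if a ≤ (i : WithBot ℤ) ∧ (i : WithTop ℤ) ≤ b then ⊤ else ⊥

lemma SabObj_coe_eq_zero {a : WithBot ℤ} {b : WithTop ℤ} {i : ℤ}
    (h : ¬ (a ≤ (i : WithBot ℤ) ∧ (i : WithTop ℤ) ≤ b)) (x : ↥(SabObj k a b i)) :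
    (x : k) = 0 := by
  have hm := x.2
  have he : SabObj k a b i = ⊥ := if_neg h
  exact (Submodule.eq_bot_iff _).1 he _ hm

/-- The transition maps of the sequence `S_{a,b}`: the map from degree `i` to degree `j`
is multiplication by `∏_{m=i}^{j-1} (-1)^m`, i.e. the composite of the maps
`(-1)^m · id` for `i ≤ m < j` (and it is zero when forced to be, i.e. when the target
component vanishes). -/
noncomputable def SabMap (a : WithBot ℤ) (b : WithTop ℤ) (i j : ℤ) :
    ↥(SabObj k a b i) →ₗ[k] ↥(SabObj k a b j) where
  toFun x := if h : a ≤ (j : WithBot ℤ) ∧ (j : WithTop ℤ) ≤ b then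
      ⟨(∏ m ∈ Finset.Ico i j, (-1 : k) ^ m) * (x : k), by
        rw [SabObj, if_pos h]; trivial⟩
    else 0
  map_add' x y := by
    by_cases h : a ≤ (j : WithBot ℤ) ∧ (j : WithTop ℤ) ≤ b
    · simp only [dif_pos h]
      ext
      push_cast
      ring
    · simp only [dif_neg h, add_zero]
  map_smul' c x := by
    by_cases h : a ≤ (j : WithBot ℤ) ∧ (j : WithTop ℤ) ≤ b
    · simp only [dif_pos h, RingHom.id_apply]
      ext
      simp [smul_eq_mul]
      ring
    · simp only [dif_neg h, smul_zero, RingHom.id_apply]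

lemma SabMap_id (a : WithBot ℤ) (b : WithTop ℤ) (i : ℤ) :
    SabMap k a b i i = LinearMap.id := by
  apply LinearMap.ext
  intro x
  by_cases h : a ≤ (i : WithBot ℤ) ∧ (i : WithTop ℤ) ≤ b
  · apply Subtype.ext
    simp [SabMap, h]
  · apply Subtype.ext
    simp [SabMap, h, SabObj_coe_eq_zero k h x]

lemma SabMap_comp (a : WithBot ℤ) (b : WithTop ℤ) {i j l : ℤ}
    (hij : i ≤ j) (hjl : j ≤ l) :
    (SabMap k a b j l).comp (SabMap k a b i j) = SabMap k a b i l := by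
  apply LinearMap.ext
  intro x
  by_cases hl : a ≤ (l : WithBot ℤ) ∧ (l : WithTop ℤ) ≤ b
  · by_cases hj : a ≤ (j : WithBot ℤ) ∧ (j : WithTop ℤ) ≤ b
    · apply Subtype.ext
      simp only [LinearMap.comp_apply, SabMap, LinearMap.coe_mk, AddHom.coe_mk,
        dif_pos hl, dif_pos hj]
      have key : (∏ m ∈ Finset.Ico i j, (-1 : k) ^ m) * (∏ m ∈ Finset.Ico j l, (-1 : k) ^ m)
          = ∏ m ∈ Finset.Ico i l, (-1 : k) ^ m := by
        rw [← Finset.prod_union (Finset.Ico_disjoint_Ico_consecutive i j l),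
          Finset.Ico_union_Ico_eq_Ico hij hjl]
      rw [← key]
      ring
    · have hi : ¬ (a ≤ (i : WithBot ℤ) ∧ (i : WithTop ℤ) ≤ b) := by
        intro hi
        exact hj ⟨le_trans hi.1 (by exact_mod_cast hij),
          le_trans (by exact_mod_cast hjl) hl.2⟩
      apply Subtype.ext
      simp [SabMap, hl, hj, SabObj_coe_eq_zero k hi x]
  · apply Subtype.ext
    simp [SabMap, hl]

/-- The sequence `S_{a,b}` for `a ∈ ℤ ∪ {−∞}` and `b ∈ ℤ ∪ {∞}`: its component in
degree `i` is `k` for `a ≤ i ≤ b` and `0` otherwise, and the transition map in degree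
`i` (within the interval) is `(-1)^i · id_k`. -/
noncomputable def Sab (a : WithBot ℤ) (b : WithTop ℤ) : SeqCat k where
  obj i := ModuleCat.of k (SabObj k a b i)
  map {i j} f := ModuleCat.ofHom (SabMap k a b i j)
  map_id i := by rw [SabMap_id k a b i]; rfl
  map_comp {i j l} f g := by rw [← SabMap_comp k a b (leOfHom f) (leOfHom g)]; rfl

/-- The condition `a ≤ b` for `a ∈ ℤ ∪ {−∞}` and `b ∈ ℤ ∪ {∞}`: the interval `[a,b]`
contains some integer. -/
def SabLE (a : WithBot ℤ) (b : WithTop ℤ) : Prop :=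
  ∃ i : ℤ, a ≤ (i : WithBot ℤ) ∧ (i : WithTop ℤ) ≤ b


/-! Every degree of `S_{n,∞}` is a subspace of `k`, so a subobject `P` is determined by the set of
degrees in which it is everything. This set contains all `i < n` and, the transition maps being
isomorphisms from degree `n` on, it is closed upwards beyond `n`. Hence the first degree `n + j`
from which `P` is full is a strictly antitone `ℕ∞`-valued invariant of `P`, and `ℕ∞` has no
infinite descending chains. -/

theorem IsSimpleModule.eq_bot_or_eq_top_of_submodule {R M : Type*} [Ring R] [AddCommGroup M]
    [Module R M] [IsSimpleModule R M] {t : Submodule R M} (W : Submodule R t) :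
    W = ⊥ ∨ W = ⊤ := by
  rcases eq_bot_or_eq_top (W.map t.subtype) with h | h
  · exact .inl (Submodule.map_injective_of_injective t.injective_subtype
      (h.trans (Submodule.map_bot _).symm))
  · exact .inr (by rw [← Submodule.comap_map_eq_of_injective t.injective_subtype W, h,
      Submodule.comap_top])

namespace CategoryTheory.Subobject

variable {J : Type*} [Category J] {R : Type*} [Ring R] {X : J ⥤ ModuleCat R}

theorem range_arrow_app_eq_top_of_surjective (P : Subobject X) {i j : J} (f : i ⟶ j)
    (hf : Function.Surjective (X.map f).hom)
    (hi : LinearMap.range (P.arrow.app i).hom = ⊤) :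
    LinearMap.range (P.arrow.app j).hom = ⊤ := by
  have hnat := congrArg ModuleCat.Hom.hom (P.arrow.naturality f)
  simp only [ModuleCat.hom_comp] at hnat
  refine eq_top_iff.2 ?_
  calc ⊤ = LinearMap.range ((X.map f).hom ∘ₗ (P.arrow.app i).hom) := by
        rw [LinearMap.range_comp, hi, Submodule.map_top, LinearMap.range_eq_top.2 hf]
    _ = LinearMap.range ((P.arrow.app j).hom ∘ₗ ((underlying.obj P).map f).hom) := by
        rw [← hnat]
    _ ≤ _ := LinearMap.range_comp_le_range _ _

theorem eq_of_le_of_range_arrow_app_le {P Q : Subobject X} (h : P ≤ Q)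
    (hrange : ∀ j, LinearMap.range (Q.arrow.app j).hom ≤ LinearMap.range (P.arrow.app j).hom) :
    P = Q := by
  have hepi (j : J) : Epi ((ofLE P Q h).app j) := by
    rw [ModuleCat.epi_iff_surjective]
    intro y
    obtain ⟨z, hz⟩ := hrange j ⟨y, rfl⟩
    refine ⟨z, (ModuleCat.mono_iff_injective (Q.arrow.app j)).1 inferInstance ?_⟩
    rw [← hz, ← ofLE_arrow h, NatTrans.comp_app]
    rfl
  have := NatTrans.epi_of_epi_app (ofLE P Q h)
  have := isIso_of_mono_of_epi (ofLE P Q h)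
  exact eq_of_comm (asIso (ofLE P Q h)) (ofLE_arrow h)

end CategoryTheory.Subobject

theorem SabMap_surjective {a : WithBot ℤ} {b : WithTop ℤ} {i j : ℤ}
    (hi : a ≤ (i : WithBot ℤ) ∧ (i : WithTop ℤ) ≤ b)
    (hj : a ≤ (j : WithBot ℤ) ∧ (j : WithTop ℤ) ≤ b) :
    Function.Surjective (SabMap k a b i j) := by
  have hu : ∏ m ∈ Finset.Ico i j, (-1 : k) ^ m ≠ 0 :=
    Finset.prod_ne_zero_iff.2 fun m _ => zpow_ne_zero m (neg_ne_zero.2 one_ne_zero)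
  intro y
  refine ⟨⟨(∏ m ∈ Finset.Ico i j, (-1 : k) ^ m)⁻¹ * y, by rw [SabObj, if_pos hi]; trivial⟩,
    Subtype.ext ?_⟩
  simp only [SabMap, LinearMap.coe_mk, AddHom.coe_mk, dif_pos hj]
  rw [← mul_assoc, mul_inv_cancel₀ hu, one_mul]

theorem subsingleton_Sab_obj {a : WithBot ℤ} {b : WithTop ℤ} {i : ℤ}
    (hi : ¬ (a ≤ (i : WithBot ℤ) ∧ (i : WithTop ℤ) ≤ b)) :
    Subsingleton ((Sab k a b).obj i) :=
  ⟨fun x y => Subtype.ext ((SabObj_coe_eq_zero k hi x).trans (SabObj_coe_eq_zero k hi y).symm)⟩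

open Subobject

noncomputable def firstFullDegree {R : Type*} [Ring R] {X : ℤ ⥤ ModuleCat R} (n : ℤ)
    (P : Subobject X) : ℕ∞ :=
  ⨅ (j : ℕ) (_ : LinearMap.range (P.arrow.app (n + j)).hom = ⊤), (j : ℕ∞)

section Sninfty

variable {k} {n : ℤ}

theorem Sab_range_arrow_app_eq_top_of_lt (P : Subobject (Sab k n ⊤)) {i : ℤ} (hi : i < n) :
    LinearMap.range (P.arrow.app i).hom = ⊤ := by
  have := subsingleton_Sab_obj k (a := n) (b := ⊤) fun h => hi.not_ge (by exact_mod_cast h.1)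
  exact Subsingleton.elim _ _

theorem Sab_range_arrow_app_eq_top_of_le (P : Subobject (Sab k n ⊤)) {i j : ℤ} (hni : n ≤ i)
    (hij : i ≤ j) (hi : LinearMap.range (P.arrow.app i).hom = ⊤) :
    LinearMap.range (P.arrow.app j).hom = ⊤ :=
  P.range_arrow_app_eq_top_of_surjective (homOfLE hij)
    (SabMap_surjective k ⟨by exact_mod_cast hni, le_top⟩
      ⟨by exact_mod_cast hni.trans hij, le_top⟩) hi

theorem strictAnti_firstFullDegree_Sab : StrictAnti (firstFullDegree (X := Sab k n ⊤) n) := by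
  intro P Q hPQ
  obtain ⟨i, hQi, hPi⟩ : ∃ i, LinearMap.range (Q.arrow.app i).hom = ⊤ ∧
      LinearMap.range (P.arrow.app i).hom ≠ ⊤ := by
    by_contra! hfull
    refine hPQ.ne (eq_of_le_of_range_arrow_app_le hPQ.le fun i => ?_)
    rcases IsSimpleModule.eq_bot_or_eq_top_of_submodule (LinearMap.range (Q.arrow.app i).hom)
      with h | h
    · exact h ▸ bot_le
    · rw [hfull i h]
      exact le_top
  obtain ⟨j, rfl⟩ : ∃ j : ℕ, i = n + j := by
    have := not_lt.1 (mt (Sab_range_arrow_app_eq_top_of_lt P) hPi)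
    exact ⟨(i - n).toNat, by omega⟩
  calc firstFullDegree n Q ≤ j := iInf₂_le j hQi
    _ < (j + 1 : ℕ) := by exact_mod_cast j.lt_succ_self
    _ ≤ firstFullDegree n P := le_iInf₂ fun j' hj' => Nat.cast_le.2 <| by
      by_contra! hj
      exact hPi (Sab_range_arrow_app_eq_top_of_le P (by omega) (by omega) hj')

instance isNoetherianObject_Sab_top : IsNoetherianObject (Sab k n ⊤) :=
  ⟨strictAnti_firstFullDegree_Sab.wellFoundedGT⟩

end Sninfty

/-- For every `n ∈ ℤ`, the object `S_{n,∞}` is a noetherian object of the abelian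
category `S`: every ascending chain of subobjects of `S_{n,∞}` is eventually
stationary. -/
theorem Sninfty_noetherian (n : ℤ)
    (c : ℕ →o Subobject (Sab k (n : WithBot ℤ) (⊤ : WithTop ℤ))) :
    ∃ N : ℕ, ∀ m : ℕ, N ≤ m → c m = c N := by
  obtain ⟨N, hN⟩ := monotone_chain_condition_of_isNoetherianObject c
  exact ⟨N, fun m hm => (hN m hm).symm⟩
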